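/- arXiv:2206.14776 — 3 statements merged into one kernel-verified Lean document; each statement's English description precedes it below -/
import Mathlib

section
/- Let Γ be a countable group of affine transformations of ℝⁿ (each γ ∈ Γ acts by x ↦ A_γ x + b_γ with A_γ an invertible linear map). Let W ⊆ ℝⁿ be a connected open set and h : W → ℝⁿ a continuously differentiable map such that for every x ∈ W, h(x) lies in the Γ-orbit of x. Then there exists γ ∈ Γ such that h(x) = A_γ x + b_γ for all x ∈ W. -/
open Set Metric Filter Topology

section Helpers

variable {V : Type*} [NormedAddCommGroup V] [NormedSpace ℝ V]

/-- A locally constant function on a preconnected set is constant. -/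
theorem locConst_eq {X α : Type*} [TopologicalSpace X] {U : Set X}
    (hU : IsPreconnected U) {g : X → α}
    (hg : ∀ x ∈ U, ∀ᶠ y in 𝓝 x, g y = g x) {a b : X} (ha : a ∈ U) (hb : b ∈ U) :
    g b = g a := by
  classical
  set u := interior {y | g y = g a} with hu
  set v := ⋃ x ∈ {x | x ∈ U ∧ g x ≠ g a}, interior {y | g y = g x} with hv
  have huo : IsOpen u := isOpen_interior
  have hvo : IsOpen v := isOpen_biUnion fun _ _ => isOpen_interior
  have hdisj : Disjoint u v := by
    rw [Set.disjoint_left]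
    rintro z hz hzv
    simp only [hv, mem_iUnion] at hzv
    obtain ⟨x, ⟨_, hxne⟩, hzx⟩ := hzv
    have h1 : z ∈ {y | g y = g a} := interior_subset hz
    have h2 : z ∈ {y | g y = g x} := interior_subset hzx
    exact hxne ((h2 : g z = g x) ▸ (h1 : g z = g a))
  have hcover : U ⊆ u ∪ v := by
    intro x hx
    have hmem : x ∈ interior {y | g y = g x} :=
      mem_interior_iff_mem_nhds.2 (hg x hx)
    by_cases hxa : g x = g a
    · left
      have : {y | g y = g x} = {y | g y = g a} := by
        ext y; simp [hxa]
      rwa [hu, ← this]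
    · right
      exact mem_biUnion ⟨hx, hxa⟩ hmem
  have hau : a ∈ u := mem_interior_iff_mem_nhds.2 (hg a ha)
  have hsub := hU.subset_left_of_subset_union huo hvo hdisj hcover ⟨a, ha, hau⟩
  have : b ∈ {y | g y = g a} := interior_subset (hsub hb)
  exact this

/-- If `g` is continuous at `p` within `U`, constant on `U`, and `p ∈ closure U`,
then `g p` equals that constant. -/
theorem eq_const_of_mem_closure {X α : Type*} [TopologicalSpace X] [TopologicalSpace α]
    [T2Space α] {U : Set X} {g : X → α} {p : X} (hg : ContinuousWithinAt g U p)
    {L : α} (hconst : ∀ x ∈ U, g x = L) (hp : p ∈ closure U) : g p = L := by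
  have hne : (𝓝[U] p).NeBot := mem_closure_iff_nhdsWithin_neBot.1 hp
  have h2 : Tendsto g (𝓝[U] p) (𝓝 L) :=
    tendsto_const_nhds.congr' (eventually_nhdsWithin_of_forall fun x hx => (hconst x hx).symm)
  exact tendsto_nhds_unique hg h2

/-- Two affine functions agreeing on a ball agree everywhere. -/
theorem affine_eq_of_eqOn_ball {L L' : V →L[ℝ] V} {b b' c : V} {ε : ℝ} (hε : 0 < ε)
    (h : ∀ x ∈ ball c ε, L x + b = L' x + b') (x : V) : L x + b = L' x + b' := by
  have hc : L c + b = L' c + b' := h c (mem_ball_self hε)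
  have hlin : ∀ v : V, L v = L' v := by
    intro v
    rcases eq_or_ne v 0 with rfl | hv
    · simp
    · set t : ℝ := ε / (2 * ‖v‖) with htdef
      have hnv : 0 < ‖v‖ := norm_pos_iff.2 hv
      have ht : 0 < t := div_pos hε (by positivity)
      have hmem : c + t • v ∈ ball c ε := by
        have hd : dist (c + t • v) c = t * ‖v‖ := by
          rw [dist_eq_norm]
          simp [norm_smul, abs_of_pos ht]
        have he : t * ‖v‖ = ε / 2 := by
          rw [htdef]; field_simp
        rw [mem_ball, hd, he]
        linarith
      have h3 := h _ hmem
      simp only [map_add, map_smul] at h3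
      rw [add_right_comm (L c), add_right_comm (L' c), hc] at h3
      have h2 : t • L v = t • L' v := add_left_cancel h3
      exact smul_right_injective V ht.ne' h2
  have hb : b = b' := by
    have := hc
    rw [hlin c] at this
    exact add_left_cancel this
  rw [hlin x, hb]

/-- On an open set where `f` coincides with an affine function, it has that derivative. -/
theorem hasFDerivAt_of_affineOn {f : V → V} {U : Set V} (hU : IsOpen U) {L : V →L[ℝ] V} {b : V}
    (hfa : ∀ y ∈ U, f y = L y + b) : ∀ y ∈ U, HasFDerivAt f L y := by
  intro y hy
  have h1 : HasFDerivAt (fun z => L z + b) L y := L.hasFDerivAt.add_const b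
  exact h1.congr_of_eventuallyEq
    (Filter.eventuallyEq_of_mem (hU.mem_nhds hy) hfa)

theorem fderiv_eq_of_affineOn {f : V → V} {U : Set V} (hU : IsOpen U) {L : V →L[ℝ] V} {b : V}
    (hfa : ∀ y ∈ U, f y = L y + b) : ∀ y ∈ U, fderiv ℝ f y = L := fun y hy =>
  (hasFDerivAt_of_affineOn hU hfa y hy).fderiv

/-- A function with constant derivative on an open convex set is affine there. -/
theorem affine_of_hasFDerivAt_const {B : Set V} (hBo : IsOpen B) (hBc : Convex ℝ B)
    {f : V → V} {L : V →L[ℝ] V} (hf : ∀ x ∈ B, HasFDerivAt f L x) :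
    ∃ c, ∀ x ∈ B, f x = L x + c := by
  rcases B.eq_empty_or_nonempty with hB | ⟨x₀, hx₀⟩
  · exact ⟨0, fun x hx => absurd hx (by simp [hB])⟩
  refine ⟨f x₀ - L x₀, fun x hx => ?_⟩
  have key : f x - L x = f x₀ - L x₀ := by
    have hdiff : DifferentiableOn ℝ (fun y => f y - L y) B := fun y hy =>
      ((hf y hy).differentiableAt.sub L.differentiableAt).differentiableWithinAt
    have hzero : ∀ y ∈ B, fderivWithin ℝ (fun z => f z - L z) B y = 0 := by
      intro y hy
      have h1 : HasFDerivAt (fun z => f z - L z) (L - L) y := (hf y hy).sub L.hasFDerivAt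
      rw [sub_self] at h1
      exact h1.hasFDerivWithinAt.fderivWithin (hBo.uniqueDiffWithinAt hy)
    exact hBc.is_const_of_fderivWithin_eq_zero hdiff hzero hx hx₀
  rw [← key]; abel

end Helpers

section OneD

variable {E : Type*} [NormedAddCommGroup E] [NormedSpace ℝ E]
variable {I : Set ℝ} {φ φd : ℝ → E}

/-- Between two zeros, a C¹ function which is locally affine off its zero set vanishes. -/
theorem zeros_between (hIc : Convex ℝ I)
    (hder : ∀ t ∈ I, HasDerivAt φ (φd t) t) (hcont : ContinuousOn φd I)
    (hloc : ∀ t ∈ I, φ t ≠ 0 → ∀ᶠ s in 𝓝 t, φd s = φd t)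
    {a b : ℝ} (ha : a ∈ I) (hb : b ∈ I) (ha0 : φ a = 0) (hb0 : φ b = 0) :
    ∀ t ∈ Icc a b, φ t = 0 := by
  intro t ⟨hat, htb⟩
  by_contra hφt
  have hIcc : Icc a b ⊆ I := hIc.ordConnected.out ha hb
  have hφcont : ContinuousOn φ I := fun s hs => (hder s hs).continuousAt.continuousWithinAt
  have hta : a < t := lt_of_le_of_ne hat (by rintro rfl; exact hφt ha0)
  have htb' : t < b := lt_of_le_of_ne htb (by rintro rfl; exact hφt hb0)
  have habI : Icc a b ⊆ I := hIcc
  -- the compact set of zeros to the left of t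
  set K₁ := {s ∈ Icc a t | φ s = 0} with hK₁
  have hK₁sub : Icc a t ⊆ I := fun s hs => habI ⟨hs.1, hs.2.trans htb⟩
  have hK₁closed : IsClosed K₁ := by
    have : K₁ = Icc a t ∩ φ ⁻¹' {0} := by
      ext s; simp [hK₁, and_comm]
    rw [this]
    exact (hφcont.mono hK₁sub).preimage_isClosed_of_isClosed isClosed_Icc isClosed_singleton
  have hK₁cpt : IsCompact K₁ :=
    (isCompact_Icc (a := a) (b := t)).of_isClosed_subset hK₁closed (sep_subset _ _)
  have hK₁ne : K₁.Nonempty := ⟨a, ⟨le_refl a, hta.le⟩, ha0⟩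
  set A := sSup K₁ with hA
  have hAK : A ∈ K₁ := hK₁cpt.sSup_mem hK₁ne
  -- the compact set of zeros to the right of t
  set K₂ := {s ∈ Icc t b | φ s = 0} with hK₂
  have hK₂sub : Icc t b ⊆ I := fun s hs => habI ⟨hta.le.trans hs.1, hs.2⟩
  have hK₂closed : IsClosed K₂ := by
    have : K₂ = Icc t b ∩ φ ⁻¹' {0} := by
      ext s; simp [hK₂, and_comm]
    rw [this]
    exact (hφcont.mono hK₂sub).preimage_isClosed_of_isClosed isClosed_Icc isClosed_singleton
  have hK₂cpt : IsCompact K₂ :=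
    (isCompact_Icc (a := t) (b := b)).of_isClosed_subset hK₂closed (sep_subset _ _)
  have hK₂ne : K₂.Nonempty := ⟨b, ⟨htb'.le, le_refl b⟩, hb0⟩
  set B' := sInf K₂ with hB'
  have hBK : B' ∈ K₂ := hK₂cpt.sInf_mem hK₂ne
  have hAt : A < t := lt_of_le_of_ne hAK.1.2 (by intro h; exact hφt (h ▸ hAK.2))
  have htB : t < B' := lt_of_le_of_ne hBK.1.1 (by intro h; rw [h] at hφt; exact hφt hBK.2)
  have hAI : A ∈ I := hK₁sub hAK.1
  have hBI : B' ∈ I := hK₂sub hBK.1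
  have hgapI : Ioo A B' ⊆ I := fun s hs =>
    habI ⟨hAK.1.1.trans hs.1.le, hs.2.le.trans hBK.1.2⟩
  have hgap : ∀ s ∈ Ioo A B', φ s ≠ 0 := by
    rintro s ⟨hAs, hsB⟩ hs0
    rcases le_or_gt s t with hst | hts
    · have hsK : s ∈ K₁ := ⟨⟨hAK.1.1.trans hAs.le, hst⟩, hs0⟩
      exact absurd (le_csSup hK₁cpt.bddAbove hsK) (not_le.2 hAs)
    · have hsK : s ∈ K₂ := ⟨⟨hts.le, hsB.le.trans hBK.1.2⟩, hs0⟩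
      exact absurd (csInf_le hK₂cpt.bddBelow hsK) (not_le.2 hsB)
  -- the derivative is a constant d on the gap
  set sm := (A + B') / 2 with hsm
  have hsmm : sm ∈ Ioo A B' := ⟨by rw [hsm]; linarith [hAt.trans htB],
    by rw [hsm]; linarith [hAt.trans htB]⟩
  set d := φd sm with hd
  have hgapconst : ∀ s ∈ Ioo A B', φd s = d :=
    fun s hs => locConst_eq isPreconnected_Ioo
      (fun z hz => hloc z (hgapI hz) (hgap z hz)) hsmm hs
  -- the derivative at A is also d
  have hAclos : A ∈ closure (Ioo A B') := by
    rw [closure_Ioo (hAt.trans htB).ne]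
    exact ⟨le_refl A, (hAt.trans htB).le⟩
  have hφdA : φd A = d :=
    eq_const_of_mem_closure ((hcont A hAI).mono hgapI) hgapconst hAclos
  -- apply the constancy theorem to ψ on [A, B']
  set ψ := fun s => φ s - (s - A) • d with hψ
  have hψder : ∀ s ∈ I, HasDerivAt ψ (φd s - d) s := by
    intro s hs
    have h1 : HasDerivAt (fun r : ℝ => (r - A) • d) ((1:ℝ) • d) s :=
      ((hasDerivAt_id s).sub_const A).smul_const d
    rw [one_smul] at h1
    exact (hder s hs).sub h1
  have hABI : Icc A B' ⊆ I := hIc.ordConnected.out hAI hBI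
  have hψcont : ContinuousOn ψ (Icc A B') := fun s hs =>
    ((hψder s (hABI hs)).continuousAt).continuousWithinAt
  have hψzero : ∀ s ∈ Ico A B', HasDerivWithinAt ψ 0 (Ici s) s := by
    intro s hs
    have hsI : s ∈ I := hABI ⟨hs.1, hs.2.le⟩
    have hφds : φd s = d := by
      rcases eq_or_lt_of_le hs.1 with h | h
      · rw [← h]; exact hφdA
      · exact hgapconst s ⟨h, hs.2⟩
    have := hψder s hsI
    rw [hφds, sub_self] at this
    exact this.hasDerivWithinAt
  have hconst := constant_of_has_deriv_right_zero hψcont hψzero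
  have hψA : ψ A = 0 := by simp [hψ, hAK.2]
  have hψB : ψ B' = 0 := hψA ▸ hconst B' ⟨(hAt.trans htB).le, le_refl B'⟩
  have hd0 : d = 0 := by
    have : (B' - A) • d = 0 := by
      have := hψB
      rw [hψ] at this
      simp only [hBK.2, zero_sub, neg_eq_zero] at this
      exact this
    rcases smul_eq_zero.1 this with h | h
    · exact absurd (sub_eq_zero.1 h) (ne_of_gt (hAt.trans htB))
    · exact h
  have hψt : ψ t = 0 := hψA ▸ hconst t ⟨hAt.le, htB.le⟩
  rw [hψ] at hψt
  simp only [hd0, smul_zero, sub_zero] at hψt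
  exact hφt hψt

end OneD

section OneD2

variable {E : Type*} [NormedAddCommGroup E] [NormedSpace ℝ E]
variable {I : Set ℝ} {φ φd : ℝ → E}

/-- A C¹ function which is locally affine off its zero set and has two distinct zeros
vanishes to the right of them as well. -/
theorem zeros_extend_right (hIc : Convex ℝ I)
    (hder : ∀ t ∈ I, HasDerivAt φ (φd t) t) (hcont : ContinuousOn φd I)
    (hloc : ∀ t ∈ I, φ t ≠ 0 → ∀ᶠ s in 𝓝 t, φd s = φd t)
    {a b t : ℝ} (ha : a ∈ I) (hb : b ∈ I) (ht : t ∈ I)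
    (ha0 : φ a = 0) (hb0 : φ b = 0) (hab : a < b) (hbt : b ≤ t) :
    φ t = 0 := by
  by_contra hφt
  have hφcont : ContinuousOn φ I := fun s hs => (hder s hs).continuousAt.continuousWithinAt
  have hatI : Icc a t ⊆ I := hIc.ordConnected.out ha ht
  have hbt' : b < t := lt_of_le_of_ne hbt (by intro h; rw [← h] at hφt; exact hφt hb0)
  set K := {s ∈ Icc b t | φ s = 0} with hK
  have hKsub : Icc b t ⊆ I := fun s hs => hatI ⟨hab.le.trans hs.1, hs.2⟩
  have hKclosed : IsClosed K := by
    have : K = Icc b t ∩ φ ⁻¹' {0} := by ext s; simp [hK, and_comm]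
    rw [this]
    exact (hφcont.mono hKsub).preimage_isClosed_of_isClosed isClosed_Icc isClosed_singleton
  have hKcpt : IsCompact K :=
    (isCompact_Icc (a := b) (b := t)).of_isClosed_subset hKclosed (sep_subset _ _)
  have hKne : K.Nonempty := ⟨b, ⟨le_refl b, hbt'.le⟩, hb0⟩
  set c := sSup K with hc
  have hcK : c ∈ K := hKcpt.sSup_mem hKne
  have hct : c < t := lt_of_le_of_ne hcK.1.2 (by intro h; rw [h] at hcK; exact hφt hcK.2)
  have hcI : c ∈ I := hKsub hcK.1
  have hbc : b ≤ c := hcK.1.1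
  have hac : a < c := hab.trans_le hbc
  have hgapI : Ioo c t ⊆ I := fun s hs =>
    hatI ⟨hab.le.trans (hbc.trans hs.1.le), hs.2.le⟩
  have hgap : ∀ s ∈ Ioo c t, φ s ≠ 0 := by
    rintro s ⟨hcs, hst⟩ hs0
    have hsK : s ∈ K := ⟨⟨hbc.trans hcs.le, hst.le⟩, hs0⟩
    exact absurd (le_csSup hKcpt.bddAbove hsK) (not_le.2 hcs)
  -- derivative constant on the gap
  set sm := (c + t) / 2 with hsm
  have hsmm : sm ∈ Ioo c t := ⟨by rw [hsm]; linarith, by rw [hsm]; linarith⟩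
  set d := φd sm with hd
  have hgapconst : ∀ s ∈ Ioo c t, φd s = d :=
    fun s hs => locConst_eq isPreconnected_Ioo
      (fun z hz => hloc z (hgapI hz) (hgap z hz)) hsmm hs
  have hcclos : c ∈ closure (Ioo c t) := by
    rw [closure_Ioo hct.ne]; exact ⟨le_refl c, hct.le⟩
  have hφdc : φd c = d :=
    eq_const_of_mem_closure ((hcont c hcI).mono hgapI) hgapconst hcclos
  -- φ vanishes on [a, c], so φd c = 0
  have hzero : ∀ s ∈ Icc a c, φ s = 0 :=
    zeros_between hIc hder hcont hloc ha hcI ha0 hcK.2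
  have hφd0 : ∀ s ∈ Ioo a c, φd s = 0 := by
    intro s hs
    have hsI : s ∈ I := hatI ⟨hs.1.le, hs.2.le.trans hct.le⟩
    have hev : φ =ᶠ[𝓝 s] fun _ => 0 :=
      Filter.eventuallyEq_of_mem (isOpen_Ioo.mem_nhds hs)
        (fun z hz => hzero z ⟨hz.1.le, hz.2.le⟩)
    have h0 : HasDerivAt φ 0 s := (hasDerivAt_const s (0:E)).congr_of_eventuallyEq hev
    exact (hder s hsI).unique h0
  have hcclos' : c ∈ closure (Ioo a c) := by
    rw [closure_Ioo hac.ne]; exact ⟨hac.le, le_refl c⟩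
  have hφdc0 : φd c = 0 :=
    eq_const_of_mem_closure ((hcont c hcI).mono (fun s hs =>
      hatI ⟨hs.1.le, hs.2.le.trans hct.le⟩)) hφd0 hcclos'
  have hd0 : d = 0 := hφdc ▸ hφdc0
  -- now φ is constant on [c, t]
  have hctI : Icc c t ⊆ I := hIc.ordConnected.out hcI ht
  have hφcont' : ContinuousOn φ (Icc c t) := hφcont.mono hctI
  have hφzero : ∀ s ∈ Ico c t, HasDerivWithinAt φ 0 (Ici s) s := by
    intro s hs
    have hsI : s ∈ I := hctI ⟨hs.1, hs.2.le⟩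
    have hφds : φd s = 0 := by
      rcases eq_or_lt_of_le hs.1 with h | h
      · rw [← h]; exact hφdc0
      · rw [hgapconst s ⟨h, hs.2⟩]; exact hd0
    have := hder s hsI
    rw [hφds] at this
    exact this.hasDerivWithinAt
  have hconst := constant_of_has_deriv_right_zero hφcont' hφzero
  have := hconst t ⟨hct.le, le_refl t⟩
  rw [hcK.2] at this
  exact hφt this

/-- Main 1D lemma: a C¹ function, locally affine off its zero set, vanishing at `0` and `1`,
vanishes on the whole (convex, open) domain. -/
theorem oneD (hIo : IsOpen I) (hIc : Convex ℝ I)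
    (hder : ∀ t ∈ I, HasDerivAt φ (φd t) t) (hcont : ContinuousOn φd I)
    (hloc : ∀ t ∈ I, φ t ≠ 0 → ∀ᶠ s in 𝓝 t, φd s = φd t)
    (h0I : (0:ℝ) ∈ I) (h1I : (1:ℝ) ∈ I) (h00 : φ 0 = 0) (h10 : φ 1 = 0) :
    ∀ t ∈ I, φ t = 0 := by
  intro t ht
  rcases le_or_gt t 0 with ht0 | ht0
  · -- reflect
    set χ := fun s : ℝ => φ (1 - s) with hχ
    set χd := fun s : ℝ => (-1 : ℝ) • φd (1 - s) with hχd
    set J := (fun s : ℝ => 1 - s) ⁻¹' I with hJ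
    have hrefc : Continuous fun s : ℝ => 1 - s := continuous_const.sub continuous_id
    have hJc : Convex ℝ J := by
      intro x hx y hy α β hα hβ hαβ
      have : (1:ℝ) - (α • x + β • y) = α • (1 - x) + β • (1 - y) := by
        simp only [smul_eq_mul]; nlinarith [hαβ]
      show (1:ℝ) - (α • x + β • y) ∈ I
      rw [this]
      exact hIc hx hy hα hβ hαβ
    have hχder : ∀ s ∈ J, HasDerivAt χ (χd s) s := by
      intro s hs
      have hinner : HasDerivAt (fun s : ℝ => 1 - s) (-1) s := by
        simpa using (hasDerivAt_id s).const_sub 1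
      simpa [Function.comp_def, hχ, hχd] using (hder (1 - s) hs).scomp s hinner
    have hχcont : ContinuousOn χd J := by
      apply ContinuousOn.smul continuousOn_const
      exact hcont.comp hrefc.continuousOn (fun s hs => hs)
    have hχloc : ∀ s ∈ J, χ s ≠ 0 → ∀ᶠ r in 𝓝 s, χd r = χd s := by
      intro s hs hχs
      have hev := hloc (1 - s) hs hχs
      have htd : Tendsto (fun r : ℝ => 1 - r) (𝓝 s) (𝓝 (1 - s)) := hrefc.continuousAt
      filter_upwards [htd.eventually hev] with r hr
      rw [hχd]
      simp only
      rw [hr]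
    have h0J : (0:ℝ) ∈ J := by show (1:ℝ) - 0 ∈ I; simpa using h1I
    have h1J : (1:ℝ) ∈ J := by show (1:ℝ) - 1 ∈ I; simpa using h0I
    have htJ : 1 - t ∈ J := by show (1:ℝ) - (1 - t) ∈ I; simpa using ht
    have hχ0 : χ 0 = 0 := by rw [hχ]; simpa using h10
    have hχ1 : χ 1 = 0 := by rw [hχ]; simpa using h00
    have := zeros_extend_right hJc hχder hχcont hχloc h0J h1J htJ hχ0 hχ1
      one_pos (by linarith)
    rw [hχ] at this
    simpa using this
  rcases le_or_gt t 1 with ht1 | ht1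
  · exact zeros_between hIc hder hcont hloc h0I h1I h00 h10 t ⟨ht0.le, ht1⟩
  · exact zeros_extend_right hIc hder hcont hloc h0I h1I ht h00 h10 one_pos ht1.le

end OneD2

section Chord

variable {V : Type*} [NormedAddCommGroup V] [NormedSpace ℝ V]

/-- Chord lemma: if `f` is C¹ on an open convex set, locally affine where it is nonzero,
and vanishes at two points, then it vanishes on the whole chord through them. -/
theorem chord_zero {B : Set V} (hBo : IsOpen B) (hBc : Convex ℝ B) {f : V → V}
    (hf : ContDiffOn ℝ 1 f B)
    (hloc : ∀ x ∈ B, f x ≠ 0 → ∃ ε > 0, ∃ L : V →L[ℝ] V, ∃ b : V,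
      ∀ y ∈ ball x ε, f y = L y + b)
    {p q : V} (hp : p ∈ B) (hq : q ∈ B) (hp0 : f p = 0) (hq0 : f q = 0)
    {t : ℝ} (ht : p + t • (q - p) ∈ B) : f (p + t • (q - p)) = 0 := by
  set σ := fun s : ℝ => p + s • (q - p) with hσ
  have hσc : Continuous σ := continuous_const.add (continuous_id.smul continuous_const)
  set I := σ ⁻¹' B with hI
  have hIo : IsOpen I := hBo.preimage hσc
  have hIc : Convex ℝ I := by
    intro x hx y hy α β hα hβ hαβ
    have hkey : σ (α • x + β • y) = α • σ x + β • σ y := by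
      have hβ' : β = 1 - α := by linarith
      subst hβ'
      simp only [hσ, smul_eq_mul]
      module
    show σ (α • x + β • y) ∈ B
    rw [hkey]
    exact hBc hx hy hα hβ hαβ
  have hdiffat : ∀ x ∈ B, DifferentiableAt ℝ f x := fun x hx =>
    (hf.differentiableOn one_ne_zero).differentiableAt (hBo.mem_nhds hx)
  set φ := f ∘ σ with hφ
  set φd := fun s : ℝ => fderiv ℝ f (σ s) (q - p) with hφd
  have hσder : ∀ s : ℝ, HasDerivAt σ (q - p) s := by
    intro s
    have h1 : HasDerivAt (fun r : ℝ => r • (q - p)) ((1:ℝ) • (q - p)) s :=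
      (hasDerivAt_id s).smul_const (q - p)
    rw [one_smul] at h1
    exact h1.const_add p
  have hder : ∀ s ∈ I, HasDerivAt φ (φd s) s := fun s hs =>
    ((hdiffat _ hs).hasFDerivAt).comp_hasDerivAt s (hσder s)
  have hfdcont : ContinuousOn (fderiv ℝ f) B := hf.continuousOn_fderiv_of_isOpen hBo le_rfl
  have hcont : ContinuousOn φd I :=
    (hfdcont.comp hσc.continuousOn (fun s hs => hs)).clm_apply continuousOn_const
  have hloc1 : ∀ s ∈ I, φ s ≠ 0 → ∀ᶠ r in 𝓝 s, φd r = φd s := by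
    intro s hs hφs
    obtain ⟨ε, hε, L, b, haff⟩ := hloc (σ s) hs hφs
    have hLf : ∀ y ∈ ball (σ s) ε, fderiv ℝ f y = L :=
      fderiv_eq_of_affineOn isOpen_ball haff
    have hmem : σ ⁻¹' ball (σ s) ε ∈ 𝓝 s :=
      hσc.continuousAt.preimage_mem_nhds (ball_mem_nhds _ hε)
    filter_upwards [hmem] with r hr
    rw [hφd]
    simp only
    rw [hLf _ hr, hLf _ (mem_ball_self hε)]
  have h0I : (0:ℝ) ∈ I := by show σ 0 ∈ B; simp [hσ, hp]
  have h1I : (1:ℝ) ∈ I := by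
    show σ 1 ∈ B
    simp only [hσ, one_smul]
    rw [add_sub_cancel]
    exact hq
  have h00 : φ 0 = 0 := by simp [hφ, hσ, Function.comp, hp0]
  have h10 : φ 1 = 0 := by
    simp only [hφ, hσ, Function.comp, one_smul]
    rw [add_sub_cancel]
    exact hq0
  exact oneD hIo hIc hder hcont hloc1 h0I h1I h00 h10 t ht

end Chord

section MainLemma

variable {V : Type*} [NormedAddCommGroup V] [NormedSpace ℝ V] [FiniteDimensional ℝ V]

set_option maxHeartbeats 1000000 in
/-- Core rigidity lemma: a C¹ map on an open convex set which is locally affine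
wherever it is nonzero is affine on the whole set. -/
theorem affine_of_locallyAffine {B : Set V} (hBo : IsOpen B) (hBc : Convex ℝ B)
    {f : V → V} (hf : ContDiffOn ℝ 1 f B)
    (hloc : ∀ x ∈ B, f x ≠ 0 → ∃ ε > 0, ∃ L : V →L[ℝ] V, ∃ b : V,
      ∀ y ∈ ball x ε, f y = L y + b) :
    ∃ (L : V →L[ℝ] V) (c : V), ∀ x ∈ B, f x = L x + c := by
  rcases B.eq_empty_or_nonempty with hBe | ⟨x₀, hx₀⟩
  · exact ⟨0, 0, fun x hx => absurd hx (by simp [hBe])⟩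
  have hdiffat : ∀ x ∈ B, DifferentiableAt ℝ f x := fun x hx =>
    (hf.differentiableOn one_ne_zero).differentiableAt (hBo.mem_nhds hx)
  have hfdcont : ContinuousOn (fderiv ℝ f) B := hf.continuousOn_fderiv_of_isOpen hBo le_rfl
  have hlocconst : ∀ x ∈ B, f x ≠ 0 → ∀ᶠ y in 𝓝 x, fderiv ℝ f y = fderiv ℝ f x := by
    intro x hx hfx
    obtain ⟨ε, hε, L, b, haff⟩ := hloc x hx hfx
    have hLf : ∀ y ∈ ball x ε, fderiv ℝ f y = L := fderiv_eq_of_affineOn isOpen_ball haff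
    filter_upwards [ball_mem_nhds x hε] with y hy
    rw [hLf y hy, hLf x (mem_ball_self hε)]
  by_cases hN : ∃ p ∈ B, f p = 0
  swap
  · -- no zeros: derivative globally locally constant
    push_neg at hN
    have hconst : ∀ x ∈ B, fderiv ℝ f x = fderiv ℝ f x₀ := fun x hx =>
      locConst_eq hBc.isPreconnected (fun y hy => hlocconst y hy (hN y hy)) hx₀ hx
    have hHas : ∀ x ∈ B, HasFDerivAt f (fderiv ℝ f x₀) x := fun x hx => by
      rw [← hconst x hx]; exact (hdiffat x hx).hasFDerivAt
    obtain ⟨c, hc⟩ := affine_of_hasFDerivAt_const hBo hBc hHas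
    exact ⟨_, c, hc⟩
  obtain ⟨p, hpB, hp0⟩ := hN
  set N := {x ∈ B | f x = 0} with hNdef
  have hpN : p ∈ N := ⟨hpB, hp0⟩
  have hNconv : Convex ℝ N := by
    intro x hx y hy α β hα hβ hαβ
    have hmemB : α • x + β • y ∈ B := hBc hx.1 hy.1 hα hβ hαβ
    refine ⟨hmemB, ?_⟩
    rcases eq_or_ne x y with rfl | hxy
    · have : α • x + β • x = x := by rw [← add_smul, hαβ, one_smul]
      rw [this]; exact hx.2
    · have hcomb : α • x + β • y = x + β • (y - x) := by
        have hα' : α = 1 - β := by linarith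
        subst hα'
        module
      rw [hcomb] at hmemB ⊢
      exact chord_zero hBo hBc hf hloc hx.1 hy.1 hx.2 hy.2 hmemB
  by_cases hspan : affineSpan ℝ N = ⊤
  · -- the zero set has nonempty interior; f vanishes identically
    have hint : (interior N).Nonempty :=
      (hNconv.interior_nonempty_iff_affineSpan_eq_top).2 hspan
    obtain ⟨z, hz⟩ := hint
    obtain ⟨ε, hε, hball⟩ := Metric.mem_nhds_iff.1 (mem_interior_iff_mem_nhds.1 hz)
    refine ⟨0, 0, fun x hx => ?_⟩
    simp only [ContinuousLinearMap.zero_apply, add_zero]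
    rcases eq_or_ne x z with rfl | hxz
    · exact (hball (mem_ball_self hε)).2
    · have hnxz : 0 < ‖x - z‖ := by
        rw [norm_pos_iff, sub_ne_zero]; exact hxz
      set δ : ℝ := ε / (2 * ‖x - z‖) with hδdef
      have hδ : 0 < δ := div_pos hε (by positivity)
      set q := z + δ • (x - z) with hqdef
      have hqball : q ∈ ball z ε := by
        have hd : dist q z = δ * ‖x - z‖ := by
          rw [hqdef, dist_eq_norm]
          simp [norm_smul, abs_of_pos hδ]
        have he : δ * ‖x - z‖ = ε / 2 := by
          rw [hδdef]; field_simp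
        rw [mem_ball, hd, he]; linarith
      have hqN : q ∈ N := hball hqball
      have hzN : z ∈ N := hball (mem_ball_self hε)
      have hx' : z + (1/δ) • (q - z) = x := by
        rw [hqdef]
        rw [add_sub_cancel_left, smul_smul, one_div, inv_mul_cancel₀ hδ.ne', one_smul]
        abel
      have := chord_zero hBo hBc hf hloc hzN.1 hqN.1 hzN.2 hqN.2 (t := 1/δ) (by rw [hx']; exact hx)
      rwa [hx'] at this
  · -- the zero set lies in a hyperplane
    have hD : vectorSpan ℝ N ≠ ⊤ := by
      intro hD
      apply hspan
      rw [eq_top_iff]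
      intro x _
      have hx : x -ᵥ p ∈ (affineSpan ℝ N).direction := by
        rw [direction_affineSpan, hD]; trivial
      have := AffineSubspace.vadd_mem_of_mem_direction hx (subset_affineSpan ℝ N hpN)
      rwa [vsub_vadd] at this
    obtain ⟨u₀, hu₀⟩ : ∃ u₀, u₀ ∉ vectorSpan ℝ N := by
      by_contra hcon
      push_neg at hcon
      exact hD (Submodule.eq_top_iff'.2 hcon)
    obtain ⟨ψ₀, hψ₀⟩ : ∃ ψ₀ : Module.Dual ℝ (V ⧸ vectorSpan ℝ N),
        ψ₀ (Submodule.Quotient.mk u₀) ≠ 0 := by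
      by_contra hcon
      push_neg at hcon
      have := (Module.forall_dual_apply_eq_zero_iff ℝ
        (Submodule.Quotient.mk (p := vectorSpan ℝ N) u₀)).1 hcon
      rw [Submodule.Quotient.mk_eq_zero] at this
      exact hu₀ this
    set ψ₁ : V →ₗ[ℝ] ℝ := ψ₀.comp (vectorSpan ℝ N).mkQ with hψ₁def
    set ψ : V →ₗ[ℝ] ℝ := (ψ₁ u₀)⁻¹ • ψ₁ with hψdef
    have hψu : ψ u₀ = 1 := by
      rw [hψdef]
      simp only [LinearMap.smul_apply, smul_eq_mul]
      exact inv_mul_cancel₀ hψ₀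
    have hψ0 : ∀ v ∈ vectorSpan ℝ N, ψ v = 0 := by
      intro v hv
      rw [hψdef]
      simp only [LinearMap.smul_apply, smul_eq_mul, hψ₁def, LinearMap.comp_apply]
      have hmk : (vectorSpan ℝ N).mkQ v = 0 := by
        rw [Submodule.mkQ_apply]
        exact (Submodule.Quotient.mk_eq_zero _).2 hv
      rw [hmk, map_zero, mul_zero]
    have hψc : Continuous ψ := ψ.continuous_of_finiteDimensional
    set c : ℝ := ψ p with hcdef
    have hNc : ∀ x ∈ N, ψ x = c := by
      intro x hx
      have hsub : x - p ∈ vectorSpan ℝ N := by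
        have := vsub_mem_vectorSpan ℝ hx hpN
        rwa [vsub_eq_sub] at this
      have := hψ0 _ hsub
      rw [map_sub, sub_eq_zero] at this
      exact this
    set Bp := {x ∈ B | c < ψ x} with hBpdef
    set Bm := {x ∈ B | ψ x < c} with hBmdef
    have hBpo : IsOpen Bp := by
      have : Bp = B ∩ {x | c < ψ x} := rfl
      rw [this]
      exact hBo.inter (isOpen_lt continuous_const hψc)
    have hBmo : IsOpen Bm := by
      have : Bm = B ∩ {x | ψ x < c} := rfl
      rw [this]
      exact hBo.inter (isOpen_lt hψc continuous_const)
    have hBpc : Convex ℝ Bp := hBc.inter (convex_halfSpace_gt ψ.isLinear c)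
    have hBmc : Convex ℝ Bm := hBc.inter (convex_halfSpace_lt ψ.isLinear c)
    have hnzp : ∀ x ∈ Bp, f x ≠ 0 := fun x hx h0 =>
      absurd (hNc x ⟨hx.1, h0⟩) (ne_of_gt hx.2)
    have hnzm : ∀ x ∈ Bm, f x ≠ 0 := fun x hx h0 =>
      absurd (hNc x ⟨hx.1, h0⟩) (ne_of_lt hx.2)
    have hconstp : ∀ x ∈ Bp, ∀ y ∈ Bp, fderiv ℝ f x = fderiv ℝ f y := fun x hx y hy =>
      locConst_eq hBpc.isPreconnected (fun z hz => hlocconst z hz.1 (hnzp z hz)) hy hx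
    have hconstm : ∀ x ∈ Bm, ∀ y ∈ Bm, fderiv ℝ f x = fderiv ℝ f y := fun x hx y hy =>
      locConst_eq hBmc.isPreconnected (fun z hz => hlocconst z hz.1 (hnzm z hz)) hy hx
    -- points of the hyperplane are in the closure of both sides
    have hclosp : ∀ x ∈ B, ψ x = c → x ∈ closure Bp := by
      intro x hx hxc
      obtain ⟨εB, hεB, hballB⟩ := Metric.isOpen_iff.1 hBo x hx
      rw [Metric.mem_closure_iff]
      intro δ hδ
      set s : ℝ := min (δ / 2) (εB / 2) / (‖u₀‖ + 1) with hsdef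
      have hmin : 0 < min (δ / 2) (εB / 2) := lt_min (by linarith) (by linarith)
      have hs : 0 < s := div_pos hmin (by positivity)
      have hsnorm : s * ‖u₀‖ < min (δ / 2) (εB / 2) := by
        rw [hsdef, div_mul_eq_mul_div, div_lt_iff₀ (by positivity : (0:ℝ) < ‖u₀‖ + 1)]
        nlinarith [norm_nonneg u₀]
      have hdist : dist (x + s • u₀) x = s * ‖u₀‖ := by
        rw [dist_eq_norm, add_sub_cancel_left, norm_smul, Real.norm_eq_abs, abs_of_pos hs]
      refine ⟨x + s • u₀, ⟨hballB ?_, ?_⟩, ?_⟩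
      · rw [mem_ball, hdist]
        exact hsnorm.trans_le ((min_le_right _ _).trans (by linarith))
      · show c < ψ (x + s • u₀)
        rw [map_add, map_smul, hψu, hxc, smul_eq_mul, mul_one]
        linarith
      · rw [dist_comm, hdist]
        exact hsnorm.trans_le ((min_le_left _ _).trans (by linarith))
    have hclosm : ∀ x ∈ B, ψ x = c → x ∈ closure Bm := by
      intro x hx hxc
      obtain ⟨εB, hεB, hballB⟩ := Metric.isOpen_iff.1 hBo x hx
      rw [Metric.mem_closure_iff]
      intro δ hδ
      set s : ℝ := min (δ / 2) (εB / 2) / (‖u₀‖ + 1) with hsdef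
      have hmin : 0 < min (δ / 2) (εB / 2) := lt_min (by linarith) (by linarith)
      have hs : 0 < s := div_pos hmin (by positivity)
      have hsnorm : s * ‖u₀‖ < min (δ / 2) (εB / 2) := by
        rw [hsdef, div_mul_eq_mul_div, div_lt_iff₀ (by positivity : (0:ℝ) < ‖u₀‖ + 1)]
        nlinarith [norm_nonneg u₀]
      have hdist : dist (x - s • u₀) x = s * ‖u₀‖ := by
        have h1 : x - s • u₀ - x = -(s • u₀) := by abel
        rw [dist_eq_norm, h1, norm_neg, norm_smul, Real.norm_eq_abs, abs_of_pos hs]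
      refine ⟨x - s • u₀, ⟨hballB ?_, ?_⟩, ?_⟩
      · rw [mem_ball, hdist]
        exact hsnorm.trans_le ((min_le_right _ _).trans (by linarith))
      · show ψ (x - s • u₀) < c
        rw [map_sub, map_smul, hψu, hxc, smul_eq_mul, mul_one]
        linarith
      · rw [dist_comm, hdist]
        exact hsnorm.trans_le ((min_le_left _ _).trans (by linarith))
    -- the derivative is constant on all of B
    have hkey : ∀ x ∈ B, fderiv ℝ f x = fderiv ℝ f p := by
      have hψp : ψ p = c := rfl
      -- helper: derivative at hyperplane points equals derivative on either side
      have hplane : ∀ x ∈ B, ψ x = c → ∀ y ∈ Bp, fderiv ℝ f x = fderiv ℝ f y := by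
        intro x hx hxc y hy
        exact eq_const_of_mem_closure
          ((hfdcont x hx).mono (fun z hz => hz.1))
          (fun z hz => hconstp z hz y hy) (hclosp x hx hxc)
      have hplanem : ∀ x ∈ B, ψ x = c → ∀ y ∈ Bm, fderiv ℝ f x = fderiv ℝ f y := by
        intro x hx hxc y hy
        exact eq_const_of_mem_closure
          ((hfdcont x hx).mono (fun z hz => hz.1))
          (fun z hz => hconstm z hz y hy) (hclosm x hx hxc)
      -- Bp is nonempty
      have hBpne : Bp.Nonempty := by
        have := hclosp p hpB hψp
        rcases Metric.mem_closure_iff.1 this 1 one_pos with ⟨y, hy, _⟩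
        exact ⟨y, hy⟩
      have hBmne : Bm.Nonempty := by
        have := hclosm p hpB hψp
        rcases Metric.mem_closure_iff.1 this 1 one_pos with ⟨y, hy, _⟩
        exact ⟨y, hy⟩
      intro x hx
      rcases lt_trichotomy (ψ x) c with hlt | heq | hgt
      · -- x ∈ Bm
        obtain ⟨y₀, hy₀⟩ := hBmne
        have h1 : fderiv ℝ f x = fderiv ℝ f y₀ := hconstm x ⟨hx, hlt⟩ y₀ hy₀
        have h2 : fderiv ℝ f p = fderiv ℝ f y₀ := hplanem p hpB hψp y₀ hy₀
        rw [h1, h2]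
      · obtain ⟨y₀, hy₀⟩ := hBpne
        have h1 : fderiv ℝ f x = fderiv ℝ f y₀ := hplane x hx heq y₀ hy₀
        have h2 : fderiv ℝ f p = fderiv ℝ f y₀ := hplane p hpB hψp y₀ hy₀
        rw [h1, h2]
      · obtain ⟨y₀, hy₀⟩ := hBpne
        have h1 : fderiv ℝ f x = fderiv ℝ f y₀ := hconstp x ⟨hx, hgt⟩ y₀ hy₀
        have h2 : fderiv ℝ f p = fderiv ℝ f y₀ := hplane p hpB hψp y₀ hy₀
        rw [h1, h2]
    have hHas : ∀ x ∈ B, HasFDerivAt f (fderiv ℝ f p) x := fun x hx => by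
      rw [← hkey x hx]; exact (hdiffat x hx).hasFDerivAt
    obtain ⟨cc, hcc⟩ := affine_of_hasFDerivAt_const hBo hBc hHas
    exact ⟨_, cc, hcc⟩

end MainLemma

section Decomp

variable {V : Type*} [NormedAddCommGroup V] [NormedSpace ℝ V] [FiniteDimensional ℝ V]

/-- Decomposition of an affine equivalence into continuous linear part plus constant. -/
theorem equiv_decomp (e : V ≃ᵃ[ℝ] V) :
    ∃ (L : V →L[ℝ] V) (b : V), ∀ x, e x = L x + b := by
  refine ⟨LinearMap.toContinuousLinearMap (e.linear : V →ₗ[ℝ] V), e 0, fun x => ?_⟩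
  have hdec := AffineMap.decomp (e.toAffineMap)
  have hx := congrFun hdec x
  simp only [AffineEquiv.coe_toAffineMap, Pi.add_apply, AffineEquiv.linear_toAffineMap] at hx
  rw [hx, LinearMap.coe_toContinuousLinearMap']

end Decomp

set_option maxHeartbeats 1600000 in
/-- Rigidity lemma: a C¹ map on a connected open subset of ℝⁿ preserving the orbits of a
countable group of affine transformations equals a single element of the group. -/
theorem stmt0 (n : ℕ) (Γ : Subgroup ((Fin n → ℝ) ≃ᵃ[ℝ] (Fin n → ℝ)))
    (hΓ : Countable Γ) (W : Set (Fin n → ℝ)) (hWo : IsOpen W) (hWc : IsConnected W)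
    (h : (Fin n → ℝ) → (Fin n → ℝ)) (hC1 : ContDiffOn ℝ 1 h W)
    (horb : ∀ x ∈ W, ∃ γ ∈ Γ, h x = γ x) :
    ∃ γ ∈ Γ, ∀ x ∈ W, h x = γ x := by
  classical
  haveI : Countable ↥Γ := hΓ
  choose Lg bg hg using fun γ : Γ => equiv_decomp γ.val
  set Eγ : Γ → Set (Fin n → ℝ) := fun γ => {x | x ∈ W ∧ h x = γ.val x} with hEγdef
  set G : Set (Fin n → ℝ) := ⋃ γ : Γ, interior (Eγ γ) with hGdef
  have hGopen : IsOpen G := isOpen_iUnion fun γ => isOpen_interior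
  -- Step A: every point of W lies in G
  have hWG : ∀ y ∈ W, y ∈ G := by
    by_contra hcon
    push_neg at hcon
    obtain ⟨y, hyW, hyG⟩ := hcon
    obtain ⟨ε, hε, hballW⟩ := Metric.isOpen_iff.1 hWo y hyW
    set R : ℝ := ε / 2 with hRdef
    have hR : 0 < R := by positivity
    have hKW : closedBall y R ⊆ W := fun w hw =>
      hballW (lt_of_le_of_lt (mem_closedBall.1 hw) (by rw [hRdef]; linarith))
    set T : Set (Fin n → ℝ) := closedBall y R ∩ Gᶜ with hTdef
    have hTclosed : IsClosed T := Metric.isClosed_closedBall.inter hGopen.isClosed_compl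
    haveI : CompleteSpace T := hTclosed.completeSpace_coe
    set F : Γ → Set T := fun γ => Subtype.val ⁻¹' (Eγ γ) with hFdef
    have hFclosed : ∀ γ : Γ, IsClosed (F γ) := by
      intro γ
      have hcont_h : Continuous fun t : T => h t.val :=
        hC1.continuousOn.comp_continuous continuous_subtype_val (fun t => hKW t.2.1)
      have hcont_γ : Continuous fun t : T => γ.val t.val := by
        have heq : (fun t : T => γ.val t.val)
            = fun t : T => Lg γ t.val + bg γ := funext fun t => hg γ t.val
        rw [heq]
        exact (((Lg γ).continuous.comp continuous_subtype_val).add continuous_const)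
      have hset : F γ = {t : T | h t.val = γ.val t.val} := by
        ext t
        exact ⟨fun ht => ht.2, fun ht => ⟨hKW t.2.1, ht⟩⟩
      rw [hset]
      exact isClosed_eq hcont_h hcont_γ
    have hFcover : ⋃ γ : Γ, F γ = univ := by
      ext t
      simp only [mem_iUnion, mem_univ, iff_true]
      obtain ⟨γ, hγΓ, hγ⟩ := horb t.val (hKW t.2.1)
      exact ⟨⟨γ, hγΓ⟩, hKW t.2.1, hγ⟩
    have hdense := dense_iUnion_interior_of_closed hFclosed hFcover
    set yT : T := ⟨y, mem_closedBall_self hR.le, hyG⟩ with hyTdef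
    obtain ⟨z, hzball, hzmem⟩ := Metric.dense_iff.1 hdense yT (R / 2) (by positivity)
    obtain ⟨γ₀, hz0⟩ := mem_iUnion.1 hzmem
    obtain ⟨δ, hδ, hsubz⟩ := Metric.mem_nhds_iff.1 (mem_interior_iff_mem_nhds.1 hz0)
    set z₀ : Fin n → ℝ := z.val with hz₀def
    have hz₀G : z₀ ∉ G := z.2.2
    have hz₀W : z₀ ∈ W := hKW z.2.1
    have hzy : dist z₀ y < R / 2 := by
      have := mem_ball.1 hzball
      rw [Subtype.dist_eq] at this
      exact this
    set ρ : ℝ := min δ (R / 2) with hρdef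
    have hρ : 0 < ρ := lt_min hδ (by positivity)
    set B : Set (Fin n → ℝ) := ball z₀ ρ with hBdef
    have hBK : ∀ w ∈ B, w ∈ closedBall y R := by
      intro w hw
      rw [mem_closedBall]
      have h1 : dist w z₀ < R / 2 := lt_of_lt_of_le (mem_ball.1 hw) (min_le_right _ _)
      calc dist w y ≤ dist w z₀ + dist z₀ y := dist_triangle _ _ _
        _ ≤ R := by linarith
    have hBW : B ⊆ W := fun w hw => hKW (hBK w hw)
    have hkey : ∀ w ∈ B, w ∉ G → w ∈ Eγ γ₀ := by
      intro w hw hwG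
      have hwT : (⟨w, hBK w hw, hwG⟩ : T) ∈ ball z δ := by
        rw [mem_ball, Subtype.dist_eq]
        exact lt_of_lt_of_le (mem_ball.1 hw) (min_le_left _ _)
      exact hsubz hwT
    -- the auxiliary function f = h - γ₀
    set f : (Fin n → ℝ) → (Fin n → ℝ) := fun x => h x - (Lg γ₀ x + bg γ₀) with hfdef
    have hfC1 : ContDiffOn ℝ 1 f B :=
      (hC1.mono hBW).sub (((Lg γ₀).contDiff.add contDiff_const).contDiffOn)
    have hfiff : ∀ x, f x = 0 ↔ h x = γ₀.val x := by
      intro x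
      rw [hfdef]
      simp only
      rw [sub_eq_zero, hg γ₀ x]
    have hfloc : ∀ x ∈ B, f x ≠ 0 → ∃ ε' > 0,
        ∃ L : (Fin n → ℝ) →L[ℝ] (Fin n → ℝ), ∃ b : Fin n → ℝ,
        ∀ v ∈ ball x ε', f v = L v + b := by
      intro x hx hfx
      have hxG : x ∈ G := by
        by_contra hxG
        exact hfx ((hfiff x).2 (hkey x hx hxG).2)
      obtain ⟨γ', hx'⟩ := mem_iUnion.1 hxG
      obtain ⟨ε', hε', hsub'⟩ := Metric.mem_nhds_iff.1 (mem_interior_iff_mem_nhds.1 hx')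
      refine ⟨ε', hε', Lg γ' - Lg γ₀, bg γ' - bg γ₀, fun v hv => ?_⟩
      have hvE : v ∈ Eγ γ' := hsub' hv
      rw [hfdef]
      simp only [ContinuousLinearMap.sub_apply]
      rw [hvE.2, hg γ' v]
      abel
    obtain ⟨L, c, hLc⟩ := affine_of_locallyAffine isOpen_ball (convex_ball _ _) hfC1 hfloc
    set Lh : (Fin n → ℝ) →L[ℝ] (Fin n → ℝ) := L + Lg γ₀ with hLhdef
    set bh : Fin n → ℝ := c + bg γ₀ with hbhdef
    have hhB : ∀ x ∈ B, h x = Lh x + bh := by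
      intro x hx
      have h1 := hLc x hx
      rw [hfdef] at h1
      simp only at h1
      rw [hLhdef, hbhdef, ContinuousLinearMap.add_apply]
      have h2 : h x = L x + c + (Lg γ₀ x + bg γ₀) := by
        rw [← h1]; abel
      rw [h2]; abel
    -- second Baire argument: h is a group element on B
    set K₂ : Set (Fin n → ℝ) := closedBall z₀ (ρ / 2) with hK₂def
    haveI : CompleteSpace K₂ := Metric.isClosed_closedBall.completeSpace_coe
    haveI : Nonempty K₂ := ⟨⟨z₀, mem_closedBall_self (by positivity)⟩⟩
    set Z : Γ → Set (Fin n → ℝ) := fun γ => {x | Lh x + bh = Lg γ x + bg γ} with hZdef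
    have hZclosed : ∀ γ : Γ, IsClosed (Z γ) :=
      fun γ => isClosed_eq ((Lh.continuous.add continuous_const))
        (((Lg γ).continuous.add continuous_const))
    set F₂ : Γ → Set K₂ := fun γ => Subtype.val ⁻¹' (Z γ) with hF₂def
    have hF₂closed : ∀ γ : Γ, IsClosed (F₂ γ) :=
      fun γ => (hZclosed γ).preimage continuous_subtype_val
    have hK₂B : K₂ ⊆ B := fun w hw =>
      mem_ball.2 (lt_of_le_of_lt (mem_closedBall.1 hw) (by linarith))
    have hF₂cover : ⋃ γ : Γ, F₂ γ = univ := by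
      ext t
      simp only [mem_iUnion, mem_univ, iff_true]
      have htB : t.val ∈ B := hK₂B t.2
      obtain ⟨γ, hγΓ, hγ⟩ := horb t.val (hBW htB)
      refine ⟨⟨γ, hγΓ⟩, ?_⟩
      show Lh t.val + bh = Lg ⟨γ, hγΓ⟩ t.val + bg ⟨γ, hγΓ⟩
      rw [← hhB t.val htB, hγ]
      exact hg ⟨γ, hγΓ⟩ t.val
    obtain ⟨γ₁, w, hwmem⟩ := nonempty_interior_of_iUnion_of_closed hF₂closed hF₂cover
    obtain ⟨δ₂, hδ₂, hsub₂⟩ := Metric.mem_nhds_iff.1 (mem_interior_iff_mem_nhds.1 hwmem)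
    -- build an honest ball inside Z γ₁
    have hwz : dist w.val z₀ ≤ ρ / 2 := mem_closedBall.1 w.2
    set s : ℝ := min (1 / 2) (δ₂ / (ρ + 1)) with hsdef
    have hs : 0 < s := lt_min (by norm_num) (by positivity)
    have hs2 : s ≤ 1 / 2 := min_le_left _ _
    set w' : Fin n → ℝ := w.val + s • (z₀ - w.val) with hw'def
    have hw'z : dist w' z₀ < ρ / 2 := by
      have h1 : w' - z₀ = (1 - s) • (w.val - z₀) := by
        rw [hw'def]; module
      have h2 : dist w' z₀ = (1 - s) * dist w.val z₀ := by
        rw [dist_eq_norm, h1, norm_smul, Real.norm_eq_abs, abs_of_pos (by linarith), dist_eq_norm]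
      rw [h2]
      nlinarith [dist_nonneg (x := w.val) (y := z₀)]
    have hw'w : dist w' w.val ≤ δ₂ / 2 := by
      have h1 : w' - w.val = s • (z₀ - w.val) := by rw [hw'def]; abel
      have h2 : dist w' w.val = s * dist z₀ w.val := by
        rw [dist_eq_norm, h1, norm_smul, Real.norm_eq_abs, abs_of_pos hs, dist_eq_norm]
      rw [h2, dist_comm]
      have h3 : s ≤ δ₂ / (ρ + 1) := min_le_right _ _
      have h4 : dist w.val z₀ ≤ ρ / 2 := hwz
      have h5 : (δ₂ / (ρ + 1)) * (ρ / 2) ≤ δ₂ / 2 := by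
        rw [div_mul_eq_mul_div, div_le_div_iff₀ (by positivity) (by norm_num)]
        nlinarith
      calc s * dist w.val z₀ ≤ (δ₂ / (ρ + 1)) * (ρ / 2) := by
            apply mul_le_mul h3 h4 dist_nonneg (by positivity)
        _ ≤ δ₂ / 2 := h5
    set η : ℝ := min (δ₂ / 2) (ρ / 2 - dist w' z₀) with hηdef
    have hη : 0 < η := lt_min (by positivity) (by linarith)
    have hball' : ∀ v ∈ ball w' η, Lh v + bh = Lg γ₁ v + bg γ₁ := by
      intro v hv
      have hv1 : dist v w' < η := mem_ball.1 hv
      have hvz : dist v z₀ ≤ ρ / 2 := by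
        have := dist_triangle v w' z₀
        have h6 : η ≤ ρ / 2 - dist w' z₀ := min_le_right _ _
        linarith
      have hvw : dist v w.val < δ₂ := by
        have := dist_triangle v w' w.val
        have h6 : η ≤ δ₂ / 2 := min_le_left _ _
        linarith
      have hmem : (⟨v, hvz⟩ : K₂) ∈ ball w δ₂ := by
        rw [mem_ball, Subtype.dist_eq]
        exact hvw
      exact hsub₂ hmem
    have hallx : ∀ x, Lh x + bh = Lg γ₁ x + bg γ₁ :=
      affine_eq_of_eqOn_ball hη hball'
    -- so h = γ₁ on B, contradicting z₀ ∉ G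
    have hBE : B ⊆ Eγ γ₁ := by
      intro x hx
      refine ⟨hBW hx, ?_⟩
      rw [hhB x hx, hallx x, hg γ₁ x]
    have : z₀ ∈ interior (Eγ γ₁) :=
      interior_maximal hBE isOpen_ball (mem_ball_self hρ)
    exact hz₀G (mem_iUnion.2 ⟨γ₁, this⟩)
  -- Step B: conclude by connectedness
  obtain ⟨x₀, hx₀W⟩ := hWc.nonempty
  obtain ⟨γs, hx₀⟩ := mem_iUnion.1 (hWG x₀ hx₀W)
  set u : Set (Fin n → ℝ) := interior (Eγ γs) with hudef
  set v : Set (Fin n → ℝ) :=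
    ⋃ γ ∈ {γ : Γ | ¬ ∀ x, γ.val x = γs.val x}, interior (Eγ γ) with hvdef
  have huo : IsOpen u := isOpen_interior
  have hvo : IsOpen v := isOpen_biUnion fun _ _ => isOpen_interior
  have hdisj : Disjoint u v := by
    rw [Set.disjoint_left]
    rintro z hzu hzv
    simp only [hvdef, mem_iUnion] at hzv
    obtain ⟨γ, hγne, hzγ⟩ := hzv
    apply hγne
    obtain ⟨ε₁, hε₁, hsub₁⟩ := Metric.mem_nhds_iff.1 (mem_interior_iff_mem_nhds.1 hzγ)
    obtain ⟨ε₂, hε₂, hsub₂⟩ := Metric.mem_nhds_iff.1 (mem_interior_iff_mem_nhds.1 hzu)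
    have hmin : 0 < min ε₁ ε₂ := lt_min hε₁ hε₂
    have heqball : ∀ x ∈ ball z (min ε₁ ε₂), Lg γ x + bg γ = Lg γs x + bg γs := by
      intro x hx
      have h1 : x ∈ Eγ γ := hsub₁ (mem_ball.2 (lt_of_lt_of_le (mem_ball.1 hx) (min_le_left _ _)))
      have h2 : x ∈ Eγ γs := hsub₂ (mem_ball.2 (lt_of_lt_of_le (mem_ball.1 hx) (min_le_right _ _)))
      rw [← hg γ x, ← hg γs x, ← h1.2, ← h2.2]
    have hall := affine_eq_of_eqOn_ball hmin heqball
    intro x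
    rw [hg γ x, hg γs x]
    exact hall x
  have hcover : W ⊆ u ∪ v := by
    intro x hx
    obtain ⟨γ', hxγ'⟩ := mem_iUnion.1 (hWG x hx)
    by_cases hev : ∀ w, γ'.val w = γs.val w
    · left
      have hEeq : Eγ γ' = Eγ γs := by
        ext w
        rw [hEγdef]
        simp only [mem_setOf_eq]
        rw [hev w]
      rwa [hudef, ← hEeq]
    · right
      exact mem_biUnion hev hxγ'
  have hWu := hWc.isPreconnected.subset_left_of_subset_union huo hvo hdisj hcover
    ⟨x₀, hx₀W, hx₀⟩
  refine ⟨γs.val, γs.2, fun x hx => ?_⟩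
  exact (interior_subset (hWu hx) : x ∈ Eγ γs).2
end

section
/- Let ψ : ℝ → ℝ be an increasing diffeomorphism with ψ(0)=0 and ψ(x) > x for x ≠ 0, and define ψ̂(x) = ψ(x) for x ≥ 0 and ψ̂(x) = ψ⁻¹(x) for x < 0. Let G = ⟨ψ⟩ and H = ⟨ψ̂⟩ be the cyclic groups of diffeomorphisms they generate. Then the orbit equivalence relations of G and H on ℝ coincide: for all x, y ∈ ℝ, (∃ k ∈ ℤ, ψᵏ(x) = y) ↔ (∃ k ∈ ℤ, ψ̂ᵏ(x) = y). -/
/-- The cyclic groups generated by ψ and by the glued map ψ̂ have the same orbits on ℝ. -/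
theorem stmt12 (ψ : Equiv.Perm ℝ) (hsm : ContDiff ℝ (⊤ : ℕ∞) ⇑ψ) (hmono : StrictMono ⇑ψ)
    (hψ0 : ψ 0 = 0) (hgt : ∀ x : ℝ, x ≠ 0 → x < ψ x)
    (ψhat : Equiv.Perm ℝ)
    (hdef : ∀ x : ℝ, ψhat x = if 0 ≤ x then ψ x else ψ.symm x) :
    ∀ x y : ℝ, (∃ k : ℤ, (ψ ^ k) x = y) ↔ (∃ k : ℤ, (ψhat ^ k) x = y) := by
  -- sign preservation of ψ and ψ.symm
  have hpos : ∀ x : ℝ, 0 ≤ x → 0 ≤ ψ x := by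
    intro x hx
    calc (0:ℝ) = ψ 0 := hψ0.symm
    _ ≤ ψ x := hmono.monotone hx
  have hneg : ∀ x : ℝ, x < 0 → ψ x < 0 := by
    intro x hx
    calc ψ x < ψ 0 := hmono hx
    _ = 0 := hψ0
  have hpos' : ∀ x : ℝ, 0 ≤ x → 0 ≤ ψ.symm x := by
    intro x hx
    by_contra h
    push_neg at h
    have := hneg _ h
    rw [Equiv.apply_symm_apply] at this
    linarith
  have hneg' : ∀ x : ℝ, x < 0 → ψ.symm x < 0 := by
    intro x hx
    by_contra h
    push_neg at h
    have := hpos _ h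
    rw [Equiv.apply_symm_apply] at this
    linarith
  -- sign preservation for all powers
  have S : ∀ k : ℤ, ∀ x : ℝ, 0 ≤ x → 0 ≤ (ψ ^ k) x := by
    intro k
    induction k using Int.induction_on with
    | zero => simp
    | succ n ih =>
      intro x hx
      rw [zpow_add_one, Equiv.Perm.mul_apply]
      exact ih _ (hpos x hx)
    | pred n ih =>
      intro x hx
      rw [zpow_sub_one, Equiv.Perm.mul_apply, Equiv.Perm.inv_def]
      exact ih _ (hpos' x hx)
  have S' : ∀ k : ℤ, ∀ x : ℝ, x < 0 → (ψ ^ k) x < 0 := by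
    intro k
    induction k using Int.induction_on with
    | zero => simp
    | succ n ih =>
      intro x hx
      rw [zpow_add_one, Equiv.Perm.mul_apply]
      exact ih _ (hneg x hx)
    | pred n ih =>
      intro x hx
      rw [zpow_sub_one, Equiv.Perm.mul_apply, Equiv.Perm.inv_def]
      exact ih _ (hneg' x hx)
  -- ψhat.symm descriptions
  have hsymm_pos : ∀ x : ℝ, 0 ≤ x → ψhat.symm x = ψ.symm x := by
    intro x hx
    symm
    rw [Equiv.eq_symm_apply, hdef, if_pos (hpos' x hx), Equiv.apply_symm_apply]
  have hsymm_neg : ∀ x : ℝ, x < 0 → ψhat.symm x = ψ x := by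
    intro x hx
    symm
    rw [Equiv.eq_symm_apply, hdef, if_neg (not_le.mpr (hneg x hx)),
      Equiv.symm_apply_apply]
  -- main comparison lemmas
  have M : ∀ k : ℤ, ∀ x : ℝ, 0 ≤ x → (ψhat ^ k) x = (ψ ^ k) x := by
    intro k
    induction k using Int.induction_on with
    | zero => simp
    | succ n ih =>
      intro x hx
      rw [zpow_add_one, Equiv.Perm.mul_apply, hdef, if_pos hx,
        zpow_add_one, Equiv.Perm.mul_apply]
      exact ih _ (hpos x hx)
    | pred n ih =>
      intro x hx
      rw [zpow_sub_one, Equiv.Perm.mul_apply, Equiv.Perm.inv_def,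
        hsymm_pos x hx, zpow_sub_one, Equiv.Perm.mul_apply, Equiv.Perm.inv_def]
      exact ih _ (hpos' x hx)
  have M' : ∀ k : ℤ, ∀ x : ℝ, x < 0 → (ψhat ^ k) x = (ψ ^ (-k)) x := by
    intro k
    induction k using Int.induction_on with
    | zero => simp
    | succ n ih =>
      intro x hx
      rw [zpow_add_one, Equiv.Perm.mul_apply, hdef,
        if_neg (not_le.mpr hx), ih _ (hneg' x hx)]
      have : (-(↑n + 1) : ℤ) = -↑n - 1 := by ring
      rw [this, zpow_sub_one, Equiv.Perm.mul_apply, Equiv.Perm.inv_def]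
    | pred n ih =>
      intro x hx
      rw [zpow_sub_one, Equiv.Perm.mul_apply, Equiv.Perm.inv_def,
        hsymm_neg x hx, ih _ (hneg x hx)]
      have : (-(-↑n - 1) : ℤ) = -(-↑n) + 1 := by ring
      rw [this, zpow_add_one, Equiv.Perm.mul_apply]
  -- conclude
  intro x y
  by_cases hx : 0 ≤ x
  · constructor
    · rintro ⟨k, rfl⟩; exact ⟨k, M k x hx⟩
    · rintro ⟨k, rfl⟩; exact ⟨k, (M k x hx).symm⟩
  · push_neg at hx
    constructor
    · rintro ⟨k, rfl⟩
      refine ⟨-k, ?_⟩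
      rw [M' (-k) x hx, neg_neg]
    · rintro ⟨k, rfl⟩
      exact ⟨-k, (M' k x hx).symm⟩
end

section
/- Let ψ : ℝ → ℝ be a smooth diffeomorphism with ψ(0) = 0 whose jet at 0 equals that of the identity (all derivatives of ψ - id vanish at 0), and suppose ψ ≠ id on every neighbourhood of 0. Then there do not exist: an open interval W around a point x₀, C¹ maps f, s defined near 0 and x₀ respectively with f(0) = x₀, s(x₀) = 0, f and s local diffeomorphisms inverse to each other near these points, and affine maps γ, δ of ℝ such that f∘s = γ and f∘ψ∘s = δ on W. (Equivalently: if f∘s and f∘ψ∘s are both affine on a neighbourhood of x₀ with f, s mutually inverse local diffeomorphisms as above, then ψ = id near 0.) -/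
/-- Core of "ℝ/⟨ψ⟩ is not a quasifold": for a diffeomorphism ψ fixing 0 with identity jet
at 0 but not equal to the identity on any neighbourhood of 0, there are no mutually
inverse local C¹ diffeomorphisms f, s (with f(0)=x₀, s(x₀)=0) conjugating both the
identity and ψ to affine maps near x₀. -/
theorem stmt18 (ψ : ℝ → ℝ) (hψ : ContDiff ℝ (⊤ : ℕ∞) ψ) (hbij : Function.Bijective ψ)
    (hψ0 : ψ 0 = 0)
    (hflat : ∀ k : ℕ, iteratedDeriv k (fun x => ψ x - x) 0 = 0)
    (hnid : ∀ ε : ℝ, 0 < ε → ∃ x : ℝ, |x| < ε ∧ ψ x ≠ x) :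
    ¬ ∃ (x₀ : ℝ) (W : Set ℝ) (f s : ℝ → ℝ) (a b c d : ℝ),
      IsOpen W ∧ x₀ ∈ W ∧ a ≠ 0 ∧ c ≠ 0 ∧
      (∃ U : Set ℝ, IsOpen U ∧ (0 : ℝ) ∈ U ∧ ContDiffOn ℝ 1 f U ∧
        ∀ y ∈ U, s (f y) = y) ∧
      (∃ V : Set ℝ, IsOpen V ∧ x₀ ∈ V ∧ ContDiffOn ℝ 1 s V ∧
        ∀ y ∈ V, f (s y) = y) ∧
      f 0 = x₀ ∧ s x₀ = 0 ∧
      (∀ x ∈ W, f (s x) = a * x + b) ∧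
      (∀ x ∈ W, f (ψ (s x)) = c * x + d) := by
  rintro ⟨x₀, W, f, s, a, b, c, d, hW, hx₀W, ha, hc,
    ⟨U, hU, h0U, hfC, hsf⟩, ⟨V, hV, hx₀V, hsC, hfs⟩, hf0, hsx₀, hA, hB⟩
  -- ψ is differentiable with ψ'(0) = 1
  have hψdiff : Differentiable ℝ ψ := hψ.differentiable (by simp)
  have hψ1 : deriv ψ 0 = 1 := by
    have h1 := hflat 1
    rw [iteratedDeriv_one] at h1
    have : deriv (fun x => ψ x - x) 0 = deriv ψ 0 - 1 := by
      rw [deriv_fun_sub (hψdiff 0) differentiableAt_fun_id]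
      simp
    rw [this] at h1
    linarith
  -- f differentiable at 0, s differentiable at x₀
  have hfd : DifferentiableAt ℝ f 0 :=
    ((hfC.differentiableOn one_ne_zero).differentiableAt (hU.mem_nhds h0U))
  have hsd : DifferentiableAt ℝ s x₀ :=
    ((hsC.differentiableOn one_ne_zero).differentiableAt (hV.mem_nhds hx₀V))
  have hVW : V ∩ W ∈ nhds x₀ := (hV.inter hW).mem_nhds ⟨hx₀V, hx₀W⟩
  -- a = 1, b = 0
  obtain ⟨ε₀, hε₀, hball⟩ := Metric.mem_nhds_iff.mp hVW
  have hpt : ∀ x ∈ V ∩ W, a * x + b = x := fun x hx => by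
    rw [← hA x hx.2, hfs x hx.1]
  have hx1 : a * x₀ + b = x₀ := hpt x₀ ⟨hx₀V, hx₀W⟩
  have hx2 : a * (x₀ + ε₀ / 2) + b = x₀ + ε₀ / 2 := by
    apply hpt
    apply hball
    simp [Real.dist_eq]
    rw [abs_of_nonneg (by linarith)]
    linarith
  have ha1 : a = 1 := by nlinarith
  have hb0 : b = 0 := by rw [ha1, one_mul] at hx1; linarith
  -- derivatives
  have hsD : HasDerivAt s (deriv s x₀) x₀ := hsd.hasDerivAt
  have hfD : HasDerivAt f (deriv f 0) (s x₀) := by rw [hsx₀]; exact hfd.hasDerivAt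
  have hψD : HasDerivAt ψ 1 (s x₀) := by
    rw [hsx₀, ← hψ1]; exact (hψdiff 0).hasDerivAt
  -- f ∘ s has derivative (deriv f 0) * (deriv s x₀) at x₀, and equals id near x₀
  have hcomp1 : HasDerivAt (fun x => f (s x)) (deriv f 0 * deriv s x₀) x₀ :=
    HasDerivAt.comp x₀ hfD hsD
  have heq1 : (fun x => f (s x)) =ᶠ[nhds x₀] id := by
    filter_upwards [hVW] with y hy
    exact hfs y hy.1
  have hid : HasDerivAt id (deriv f 0 * deriv s x₀) x₀ :=
    hcomp1.congr_of_eventuallyEq heq1.symm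
  have hfs1 : deriv f 0 * deriv s x₀ = 1 := hid.unique (hasDerivAt_id x₀)
  -- f ∘ ψ ∘ s has derivative deriv f 0 * (1 * deriv s x₀) = 1 at x₀; it equals c
  have hψf : HasDerivAt f (deriv f 0) (ψ (s x₀)) := by
    rw [hsx₀, hψ0]; exact hfd.hasDerivAt
  have hcomp2 : HasDerivAt (fun x => f (ψ (s x))) (deriv f 0 * (1 * deriv s x₀)) x₀ :=
    HasDerivAt.comp x₀ hψf (HasDerivAt.comp x₀ hψD hsD)
  have heq2 : (fun x => f (ψ (s x))) =ᶠ[nhds x₀] (fun x => c * x + d) := by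
    filter_upwards [hW.mem_nhds hx₀W] with y hy
    exact hB y hy
  have hlin : HasDerivAt (fun x => c * x + d) (deriv f 0 * (1 * deriv s x₀)) x₀ :=
    hcomp2.congr_of_eventuallyEq heq2.symm
  have hlin' : HasDerivAt (fun x : ℝ => c * x + d) c x₀ := by
    simpa using ((hasDerivAt_id x₀).const_mul c).add_const d
  have hc1 : c = 1 := by
    have := hlin.unique hlin'
    rw [one_mul, hfs1] at this
    linarith
  have hd0 : d = 0 := by
    have := hB x₀ hx₀W
    rw [hsx₀, hψ0, hf0, hc1] at this
    linarith
  -- ψ = id near 0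
  have key : ∀ᶠ y in nhds (0 : ℝ), ψ y = y := by
    have hfc : ContinuousAt f 0 := hfd.continuousAt
    have hmem1 : f ⁻¹' (V ∩ W) ∈ nhds (0 : ℝ) := by
      apply hfc.preimage_mem_nhds
      rw [hf0]
      exact hVW
    have hmem2 : ψ ⁻¹' U ∈ nhds (0 : ℝ) := by
      apply (hψ.continuous.continuousAt).preimage_mem_nhds
      rw [hψ0]
      exact hU.mem_nhds h0U
    filter_upwards [hU.mem_nhds h0U, hmem1, hmem2] with y hyU hyVW hyψU
    have h1 : s (f y) = y := hsf y hyU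
    have h2 : f (ψ (s (f y))) = f y := by
      rw [hB (f y) hyVW.2, hc1, hd0]; ring
    rw [h1] at h2
    have h3 : s (f (ψ y)) = ψ y := hsf (ψ y) hyψU
    rw [h2, h1] at h3
    exact h3.symm
  rw [Metric.eventually_nhds_iff] at key
  obtain ⟨ε, hε, hb⟩ := key
  obtain ⟨x, hx, hne⟩ := hnid ε hε
  exact hne (hb (by simpa [Real.dist_eq] using hx))
end
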